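/- Every f ∈ G_n with A(f) = 0 can be written as a product of at most 4 involutions of G_n. -/

import Mathlib

/-!
Write `f = (α, σ)`, let `c` be the rotation `j ↦ j + 1` and `h = (α, 1)`. Then
`f = (α, c) · h⁻¹ (0, c⁻¹σ) h`, and it suffices that both factors are products of two involutions.
The second is conjugate to a permutation, and every permutation is a product of two involutions
(reverse each of its cycles). For the first, conjugating by a translation `(t, 1)` changes `α` by
the coboundary `t ∘ c - t`, so only `S = ∑ α` matters and `(α, c)` is conjugate to `(S δ₀, c)`.
Since `2S = 0`, this equals `(0, j ↦ 1 - j) · (S δ₀, j ↦ -j)`, a product of two involutions.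
-/

abbrev Circle1 : Type := AddCircle (1 : ℝ)

abbrev Gn (n : ℕ) : Type := (Fin n → Circle1) × Equiv.Perm (Fin n)

namespace Gn
variable {n : ℕ}

noncomputable instance : Mul (Gn n) := ⟨fun f g => ⟨fun j => g.1 j + f.1 (g.2 j), f.2 * g.2⟩⟩
noncomputable instance : One (Gn n) := ⟨⟨fun _ => 0, 1⟩⟩
noncomputable instance : Inv (Gn n) := ⟨fun f => ⟨fun j => -f.1 (f.2⁻¹ j), f.2⁻¹⟩⟩

noncomputable instance : Group (Gn n) where
  mul_assoc f g h := Prod.ext (funext fun j => (add_assoc _ _ _).symm) rfl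
  one_mul f := Prod.ext (funext fun j => add_zero _) (one_mul _)
  mul_one f := Prod.ext (funext fun j => zero_add _) (mul_one _)
  inv_mul_cancel f := Prod.ext
    (funext fun j => show f.1 j + -f.1 (f.2⁻¹ (f.2 j)) = 0 by simp)
    (inv_mul_cancel _)

@[simp] lemma mul_fst (f g : Gn n) (j : Fin n) : (f * g).1 j = g.1 j + f.1 (g.2 j) := rfl
@[simp] lemma mul_snd (f g : Gn n) : (f * g).2 = f.2 * g.2 := rfl
@[simp] lemma one_fst (j : Fin n) : (1 : Gn n).1 j = 0 := rfl
@[simp] lemma one_snd : (1 : Gn n).2 = 1 := rfl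
@[simp] lemma inv_fst (f : Gn n) (j : Fin n) : (f⁻¹).1 j = -f.1 (f.2⁻¹ j) := rfl
@[simp] lemma inv_snd (f : Gn n) : (f⁻¹).2 = f.2⁻¹ := rfl


/-- The map `A : G_n → 𝕋`, `A(α, σ) = 2(α_1 + ⋯ + α_n)` (it is a group homomorphism). -/
noncomputable def Afun (f : Gn n) : Circle1 := 2 • ∑ j, f.1 j

end Gn

/-- Terminology from the literature on reversible elements; either factor may be `1`. -/
def IsStronglyReal {M : Type*} [Monoid M] (g : M) : Prop :=
  ∃ x y : M, x * x = 1 ∧ y * y = 1 ∧ x * y = g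

namespace IsStronglyReal

theorem map {M N F : Type*} [Monoid M] [Monoid N] [FunLike F M N] [MonoidHomClass F M N]
    {g : M} (hg : IsStronglyReal g) (φ : F) : IsStronglyReal (φ g) := by
  obtain ⟨x, y, hx, hy, rfl⟩ := hg
  exact ⟨φ x, φ y, by rw [← map_mul, hx, map_one], by rw [← map_mul, hy, map_one],
    (map_mul φ x y).symm⟩

theorem conj {G : Type*} [Group G] {g : G} (hg : IsStronglyReal g) (u : G) :
    IsStronglyReal (u * g * u⁻¹) :=
  hg.map (MulAut.conj u)

theorem exists_list_prod_eq_mul {M : Type*} [Monoid M] {a b : M} (ha : IsStronglyReal a)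
    (hb : IsStronglyReal b) :
    ∃ l : List M, l.length ≤ 4 ∧ (∀ T ∈ l, T * T = 1) ∧ l.prod = a * b := by
  obtain ⟨x, y, hx, hy, rfl⟩ := ha
  obtain ⟨z, w, hz, hw, rfl⟩ := hb
  refine ⟨[x, y, z, w], le_rfl, ?_, by simp [mul_assoc]⟩
  simp only [List.mem_cons, List.not_mem_nil, or_false]
  rintro T (rfl | rfl | rfl | rfl) <;> assumption

end IsStronglyReal

theorem Equiv.subLeft_mul_self {A : Type*} [AddCommGroup A] (a : A) :
    Equiv.subLeft a * Equiv.subLeft a = 1 :=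
  Equiv.ext (Equiv.subLeft_involutive a)

theorem Equiv.neg_mul_self (A : Type*) [InvolutiveNeg A] : Equiv.neg A * Equiv.neg A = 1 :=
  Equiv.ext neg_neg

theorem finRotate_succ_eq_subLeft_mul_neg (m : ℕ) :
    finRotate (m + 1) = Equiv.subLeft 1 * Equiv.neg (Fin (m + 1)) := by
  ext j; simp [add_comm]

theorem isStronglyReal_finRotate_succ (m : ℕ) : IsStronglyReal (finRotate (m + 1)) :=
  ⟨_, _, Equiv.subLeft_mul_self 1, Equiv.neg_mul_self _,
    (finRotate_succ_eq_subLeft_mul_neg m).symm⟩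

namespace Equiv.Perm

variable {α : Type*} [DecidableEq α] [Fintype α]

theorem IsCycle.exists_involutions_mul_eq {σ : Perm α} (hσ : σ.IsCycle) :
    ∃ a b : Perm α, a * a = 1 ∧ b * b = 1 ∧ a * b = σ ∧
      a.support ⊆ σ.support ∧ b.support ⊆ σ.support := by
  obtain ⟨k, hk⟩ : ∃ k, σ.support.card = k + 2 :=
    ⟨_, (Nat.sub_add_cancel hσ.two_le_card_support).symm⟩
  set e := (σ.support.equivFinOfCardEq hk).symm
  have hconj : IsConj ((finRotate (k + 2)).extendDomain e) σ :=
    (isCycle_finRotate.extendDomain e).isConj hσ (by rw [card_support_extend_domain,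
      support_finRotate, Finset.card_univ, Fintype.card_fin, hk])
  obtain ⟨π, hπ⟩ := _root_.isConj_iff.mp hconj
  set φ : Perm (Fin (k + 2)) →* Perm α := (MulAut.conj π).toMonoidHom.comp (extendDomainHom e)
  have hφ : φ (finRotate (k + 2)) = σ := hπ
  have hsupport (x : Perm (Fin (k + 2))) : (φ x).support ⊆ σ.support := by
    rw [← hφ]
    simp only [φ, MonoidHom.comp_apply, extendDomainHom_apply, MulEquiv.coe_toMonoidHom,
      MulAut.conj_apply, support_conj, support_extend_domain, support_finRotate]
    exact Finset.map_subset_map.mpr (Finset.map_subset_map.mpr (Finset.subset_univ _))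
  obtain ⟨a, b, ha, hb, hab⟩ := isStronglyReal_finRotate_succ (k + 1)
  refine ⟨φ a, φ b, ?_, ?_, ?_, hsupport a, hsupport b⟩
  · rw [← map_mul, ha, map_one]
  · rw [← map_mul, hb, map_one]
  · rw [← map_mul, hab, hφ]

theorem exists_involutions_mul_eq (σ : Perm α) :
    ∃ a b : Perm α, a * a = 1 ∧ b * b = 1 ∧ a * b = σ ∧
      a.support ⊆ σ.support ∧ b.support ⊆ σ.support := by
  induction σ using cycle_induction_on with
  | base_one => exact ⟨1, 1, mul_one 1, mul_one 1, mul_one 1, by simp, by simp⟩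
  | base_cycles σ hσ => exact hσ.exists_involutions_mul_eq
  | induction_disjoint σ τ hd _ ihσ ihτ =>
    obtain ⟨a, b, ha, hb, hab, hsa, hsb⟩ := ihσ
    obtain ⟨a', b', ha', hb', hab', hsa', hsb'⟩ := ihτ
    have hcomm {x y : Perm α} (hx : x.support ⊆ σ.support) (hy : y.support ⊆ τ.support) :
        Commute y x :=
      (hd.mono hx hy).commute.symm
    have hunion {x y : Perm α} (hx : x.support ⊆ σ.support) (hy : y.support ⊆ τ.support) :
        (x * y).support ⊆ (σ * τ).support :=
      (support_mul_le x y).trans (hd.support_mul ▸ Finset.union_subset_union hx hy)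
    refine ⟨a * a', b * b', ?_, ?_, ?_, hunion hsa hsa', hunion hsb hsb'⟩
    · rw [(hcomm hsa hsa').mul_mul_mul_comm, ha, ha', one_mul]
    · rw [(hcomm hsb hsb').mul_mul_mul_comm, hb, hb', one_mul]
    · rw [(hcomm hsb hsa').mul_mul_mul_comm, hab, hab']

theorem isStronglyReal (σ : Perm α) : IsStronglyReal σ :=
  let ⟨a, b, ha, hb, hab, _⟩ := exists_involutions_mul_eq σ
  ⟨a, b, ha, hb, hab⟩

end Equiv.Perm

theorem exists_comp_finRotate_sub_eq {A : Type*} [AddCommGroup A] {n : ℕ} (d : Fin n → A)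
    (hd : ∑ j, d j = 0) : ∃ t : Fin n → A, ∀ j, t (finRotate n j) - t j = d j := by
  cases n with
  | zero => exact ⟨0, fun j => j.elim0⟩
  | succ m =>
    refine ⟨fun j => Fin.partialSum d j.castSucc, fun j => ?_⟩
    have hsum : Fin.partialSum d (Fin.last (m + 1)) = ∑ j, d j := by
      rw [Fin.partialSum, Fin.val_last, List.take_of_length_le (by simp), List.sum_ofFn]
    dsimp only
    induction j using Fin.lastCases with
    | last =>
      rw [← Fin.succ_last, Fin.partialSum_succ, hd] at hsum
      rw [finRotate_last, Fin.castSucc_zero, Fin.partialSum_zero, zero_sub]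
      exact neg_eq_of_add_eq_zero_right hsum
    | cast i =>
      rw [finRotate_apply, Fin.coeSucc_eq_succ, ← Fin.succ_castSucc, Fin.partialSum_succ,
        add_sub_cancel_left]

namespace Gn

variable {n : ℕ}

noncomputable def ofPerm : Equiv.Perm (Fin n) →* Gn n where
  toFun σ := (0, σ)
  map_one' := rfl
  map_mul' _ _ := Prod.ext (funext fun _ => (add_zero 0).symm) rfl

theorem mk_mul_conj_ofPerm (f : Gn n) (σ : Equiv.Perm (Fin n)) :
    (f.1, σ) * ((f.1, 1)⁻¹ * ofPerm (σ⁻¹ * f.2) * (f.1, 1)) = f := by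
  ext j <;> simp [ofPerm]

theorem translation_mul_mul_inv (t α : Fin n → Circle1) (σ : Equiv.Perm (Fin n)) :
    ((t, 1) : Gn n) * (α, σ) * (t, 1)⁻¹ = (fun j => α j + (t (σ j) - t j), σ) := by
  ext j
  · simp only [mul_fst, inv_fst, inv_snd, inv_one, Equiv.Perm.coe_one, id_eq]
    abel
  · simp

theorem isStronglyReal_single_finRotate {m : ℕ} {S : Circle1} (hS : 2 • S = 0) :
    IsStronglyReal ((Pi.single 0 S, finRotate (m + 1)) : Gn (m + 1)) := by
  refine ⟨ofPerm (Equiv.subLeft 1), (Pi.single 0 S, Equiv.neg _), ?_, ?_, ?_⟩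
  · rw [← map_mul, Equiv.subLeft_mul_self, map_one]
  · refine Prod.ext (funext fun j => ?_) (Equiv.neg_mul_self _)
    rcases eq_or_ne j 0 with rfl | hj
    · simpa [two_nsmul] using hS
    · simp [hj]
  · exact Prod.ext (funext fun j => by simp [ofPerm]) (finRotate_succ_eq_subLeft_mul_neg m).symm

theorem isStronglyReal_finRotate {α : Fin n → Circle1} (hα : 2 • ∑ j, α j = 0) :
    IsStronglyReal ((α, finRotate n) : Gn n) := by
  cases n with
  | zero =>
    exact ⟨1, 1, mul_one 1, mul_one 1, Prod.ext (funext (·.elim0)) (Subsingleton.elim _ _)⟩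
  | succ m =>
    obtain ⟨t, ht⟩ := exists_comp_finRotate_sub_eq (Pi.single 0 (∑ j, α j) - α)
      (by simp [Finset.sum_sub_distrib])
    have hconj : ((t, 1) : Gn (m + 1)) * (α, finRotate (m + 1)) * (t, 1)⁻¹ =
        (Pi.single 0 (∑ j, α j), finRotate (m + 1)) := by
      rw [translation_mul_mul_inv]
      exact Prod.ext (funext fun j => by simp only [ht, Pi.sub_apply, add_sub_cancel]) rfl
    convert (isStronglyReal_single_finRotate hα).conj (t, 1)⁻¹ using 1
    rw [← hconj]
    group

end Gn

/-- Every `f ∈ G_n` with `A(f) = 0` is a product of at most `4` involutions of `G_n`. -/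
theorem stmt10 {n : ℕ} (f : Gn n) (hf : Gn.Afun f = 0) :
    ∃ l : List (Gn n), l.length ≤ 4 ∧ (∀ T ∈ l, T * T = 1) ∧ l.prod = f := by
  have hcycle : IsStronglyReal ((f.1, finRotate n) : Gn n) := Gn.isStronglyReal_finRotate hf
  have hrest :=
    ((Equiv.Perm.isStronglyReal ((finRotate n)⁻¹ * f.2)).map Gn.ofPerm).conj (f.1, 1)⁻¹
  rw [inv_inv] at hrest
  rw [← Gn.mk_mul_conj_ofPerm f (finRotate n)]
  exact hcycle.exists_list_prod_eq_mul hrest
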